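/- For c ∈ C₁₀ and s ∈ {1, −1}, define v_{c,s} ∈ ℝ^{4×4} × ℝ ≅ ℝ^17 by setting the (i,j) coordinate to (−1)^{c(i,j)}·(2/3) and the last coordinate to s·√8/3. Then: (a) each v_{c,s} has squared Euclidean norm 8; (b) ⟨v_{c,s}, w⟩ ≤ 4 for every w in the 5346-vector 17-dimensional base configuration W; and (c) for (c,s) ≠ (c',s') with c, c' ∈ C₁₀, one has ⟨v_{c,s}, v_{c',s'}⟩ ≤ 4 if and only if either s = s' and the Hamming distance between c and c' is at least 6, or s ≠ s' and c ≠ c'. -/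

import Mathlib

open scoped RealInnerProductSpace

/-- `C₁₀`: the set of `4×4` matrices over `𝔽₂` all of whose four row sums and
four column sums are equal to one common value in `𝔽₂`. -/
def C10 : Set (Fin 4 × Fin 4 → ZMod 2) :=
  {m | ∃ s : ZMod 2, (∀ i : Fin 4, ∑ j : Fin 4, m (i, j) = s) ∧
        (∀ j : Fin 4, ∑ i : Fin 4, m (i, j) = s)}

/-- `C₆ = C₁₀^⊥`: the dual code of `C₁₀` under the standard bilinear form. -/
def C6 : Set (Fin 4 × Fin 4 → ZMod 2) :=
  {x | ∀ c ∈ C10, (∑ p : Fin 4 × Fin 4, x p * c p) = 0}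

/-- The odd 16-dimensional kissing configuration in `ℝ^{4×4}`. -/
def oddConfig16 : Set (EuclideanSpace ℝ (Fin 4 × Fin 4)) :=
  {w | (∃ p q : Fin 4 × Fin 4, p ≠ q ∧ (w p = 2 ∨ w p = -2) ∧ (w q = 2 ∨ w q = -2) ∧
          ∀ r : Fin 4 × Fin 4, r ≠ p → r ≠ q → w r = 0) ∨
       (∃ c ∈ C6, hammingNorm c = 8 ∧
          (∀ p : Fin 4 × Fin 4, c p ≠ 0 → (w p = 1 ∨ w p = -1)) ∧
          (∀ p : Fin 4 × Fin 4, c p = 0 → w p = 0) ∧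
          Odd {p : Fin 4 × Fin 4 | w p = -1}.ncard)}

/-- The space `ℝ^{4×4} × ℝ ≅ ℝ^17` with the `L²` inner product. -/
noncomputable abbrev Space17 : Type :=
  WithLp 2 (EuclideanSpace ℝ (Fin 4 × Fin 4) × ℝ)

/-- The pair `(v, t) ∈ ℝ^{4×4} × ℝ` as an element of `ℝ^17`. -/
noncomputable def pair17 (v : EuclideanSpace ℝ (Fin 4 × Fin 4)) (t : ℝ) : Space17 :=
  (WithLp.equiv 2 (EuclideanSpace ℝ (Fin 4 × Fin 4) × ℝ)).symm (v, t)

/-- The 17-dimensional base configuration `W ⊆ ℝ^{4×4} × ℝ` of 5346 vectors. -/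
def baseConfig17 : Set Space17 :=
  (fun v => pair17 v 0) '' oddConfig16 ∪
  {x | ∃ (v : EuclideanSpace ℝ (Fin 4 × Fin 4)) (t : ℝ),
        (t = Real.sqrt 2 ∨ t = -Real.sqrt 2) ∧
        (∃ c ∈ C6, hammingNorm c = 6 ∧
          (∀ p : Fin 4 × Fin 4, c p ≠ 0 → (v p = 1 ∨ v p = -1)) ∧
          (∀ p : Fin 4 × Fin 4, c p = 0 → v p = 0) ∧
          Odd {p : Fin 4 × Fin 4 | v p = -1}.ncard) ∧
        x = pair17 v t} ∪
  {pair17 0 (Real.sqrt 8), pair17 0 (-Real.sqrt 8)}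

/-- The deep-hole vector `v_{c,s} ∈ ℝ^{4×4} × ℝ` whose `(i,j)` coordinate is
`(-1)^{c(i,j)}·(2/3)` and whose last coordinate is `s·√8/3`. -/
noncomputable def holeVector (c : Fin 4 × Fin 4 → ZMod 2) (s : ℝ) : Space17 :=
  pair17 (WithLp.toLp 2 (fun p => (if c p = 0 then (1 : ℝ) else -1) * (2 / 3))) (s * Real.sqrt 8 / 3)

/-!
With `σ(c) ∈ {±1}^{16}` the sign vector of `c`, all inner products reduce to sums of signs:
`⟪v_{c,s}, v_{c',s'}⟫ = (4/9)(16 - 2 d(c,c')) + (8/9) s s'`, so (a) and (c) come down to the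
facts that distances in `C₁₀` are even and that distinct words of `C₁₀` are at distance at
least 4. In (b) the only tight case is a vector `w` supported on a word `x ∈ C₆`: on the support
of `x` the product of the entries of `σ(c) ⊙ w` is `(-1)^{⟨x, c⟩} · (-1) = -1`, so one of them is
negative and `⟪σ(c), w⟫ ≤ |x| - 2`.
-/

open Finset

section SignSums

variable {ι : Type*} {F : Finset ι} {f : ι → ℝ}

theorem sum_eq_card_sub_two_mul_card_filter (hf : ∀ p ∈ F, f p = 1 ∨ f p = -1) :
    ∑ p ∈ F, f p = #F - 2 * #(F.filter (f · = -1)) := by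
  rw [← sum_filter_add_sum_filter_not F (f · = -1),
    sum_congr rfl fun p hp => (mem_filter.1 hp).2,
    sum_congr rfl fun p hp => ((hf p (mem_filter.1 hp).1).resolve_right (mem_filter.1 hp).2)]
  have hcard := card_filter_add_card_filter_not (s := F) (f · = -1)
  simp only [sum_const, nsmul_eq_mul, mul_neg, mul_one]
  rw [← hcard]
  push_cast
  ring

theorem prod_eq_neg_one_pow_card_filter (hf : ∀ p ∈ F, f p = 1 ∨ f p = -1) :
    ∏ p ∈ F, f p = (-1) ^ #(F.filter (f · = -1)) := by
  rw [← prod_filter_mul_prod_filter_not F (f · = -1),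
    prod_congr rfl fun p hp => (mem_filter.1 hp).2,
    prod_congr rfl fun p hp => ((hf p (mem_filter.1 hp).1).resolve_right (mem_filter.1 hp).2)]
  simp

end SignSums

theorem ZMod.eq_zero_or_eq_one (z : ZMod 2) : z = 0 ∨ z = 1 := by
  decide +revert

def bitSign (z : ZMod 2) : ℝ := if z = 0 then 1 else -1

theorem bitSign_eq_one_or_neg_one (z : ZMod 2) : bitSign z = 1 ∨ bitSign z = -1 := by
  unfold bitSign; split_ifs <;> simp

theorem bitSign_add (a b : ZMod 2) : bitSign (a + b) = bitSign a * bitSign b := by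
  rcases a.eq_zero_or_eq_one with rfl | rfl <;>
    rcases b.eq_zero_or_eq_one with rfl | rfl <;> norm_num +decide [bitSign]

theorem bitSign_mul_bitSign_eq_neg_one_iff (a b : ZMod 2) :
    bitSign a * bitSign b = -1 ↔ a ≠ b := by
  rcases a.eq_zero_or_eq_one with rfl | rfl <;>
    rcases b.eq_zero_or_eq_one with rfl | rfl <;> norm_num +decide [bitSign]

theorem bitSign_mul_le_abs (z : ZMod 2) (a : ℝ) : bitSign z * a ≤ |a| := by
  rcases bitSign_eq_one_or_neg_one z with h | h <;> rw [h]
  · simpa using le_abs_self a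
  · simpa using neg_le_abs a

theorem prod_bitSign {ι : Type*} (F : Finset ι) (c : ι → ZMod 2) :
    ∏ p ∈ F, bitSign (c p) = bitSign (∑ p ∈ F, c p) := by
  induction F using Finset.cons_induction with
  | empty => simp [bitSign]
  | cons a F ha ih => rw [prod_cons, sum_cons, bitSign_add, ih]

section Hamming

variable {ι : Type*} [Fintype ι]

theorem sum_bitSign_mul_bitSign (c c' : ι → ZMod 2) :
    ∑ p, bitSign (c p) * bitSign (c' p) = Fintype.card ι - 2 * hammingDist c c' := by
  rw [sum_eq_card_sub_two_mul_card_filter fun p _ => by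
    rcases bitSign_eq_one_or_neg_one (c p) with h | h <;>
    rcases bitSign_eq_one_or_neg_one (c' p) with h' | h' <;> simp [h, h']]
  simp only [bitSign_mul_bitSign_eq_neg_one_iff, card_univ]
  rfl

theorem natCast_hammingNorm (f : ι → ZMod 2) : (hammingNorm f : ZMod 2) = ∑ p, f p := by
  rw [hammingNorm, card_filter, Nat.cast_sum]
  refine sum_congr rfl fun p _ => ?_
  rcases (f p).eq_zero_or_eq_one with h | h <;> simp [h]

theorem even_hammingNorm_of_sum_eq_zero {f : ι → ZMod 2} (hf : ∑ p, f p = 0) :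
    Even (hammingNorm f) := by
  rw [← ZMod.natCast_eq_zero_iff_even, natCast_hammingNorm, hf]

theorem two_le_hammingNorm_of_sum_eq_zero {f : ι → ZMod 2} (hf : ∑ p, f p = 0) (h0 : f ≠ 0) :
    2 ≤ hammingNorm f := by
  obtain ⟨k, hk⟩ := even_hammingNorm_of_sum_eq_zero hf
  have := hammingNorm_pos_iff.2 h0
  omega

end Hamming

section Matrix

variable {α β γ : Type*} [Fintype α] [Fintype β] [DecidableEq γ] [Zero γ]

theorem hammingNorm_eq_sum_rows (c : α × β → γ) :
    hammingNorm c = ∑ i, hammingNorm fun j => c (i, j) := by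
  simp only [hammingNorm, card_filter]
  exact Fintype.sum_prod_type _

theorem hammingNorm_eq_sum_cols (c : α × β → γ) :
    hammingNorm c = ∑ j, hammingNorm fun i => c (i, j) := by
  simp only [hammingNorm, card_filter]
  exact Fintype.sum_prod_type_right _

theorem card_le_hammingNorm_of_rows_ne_zero {c : α × β → γ}
    (h : ∀ i, (fun j => c (i, j)) ≠ 0) : Fintype.card α ≤ hammingNorm c :=
  calc Fintype.card α = ∑ _i : α, 1 := by simp
    _ ≤ ∑ i, hammingNorm fun j => c (i, j) := sum_le_sum fun i _ => hammingNorm_pos_iff.2 (h i)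
    _ = hammingNorm c := (hammingNorm_eq_sum_rows c).symm

/-- A nonzero row with even sum meets two columns, each of which again has at least two
nonzero entries. -/
theorem four_le_hammingNorm_of_sums_eq_zero {c : α × β → ZMod 2}
    (hrow : ∀ i, ∑ j, c (i, j) = 0) (hcol : ∀ j, ∑ i, c (i, j) = 0) (h0 : c ≠ 0) :
    4 ≤ hammingNorm c := by
  classical
  obtain ⟨⟨i, j⟩, hij⟩ := Function.ne_iff.1 h0
  have hcol_two : ∀ j, c (i, j) ≠ 0 → 2 ≤ hammingNorm fun i' => c (i', j) :=
    fun j hj => two_le_hammingNorm_of_sum_eq_zero (hcol j) fun h => hj (congrFun h i)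
  obtain ⟨j₁, hj₁, j₂, hj₂, hne⟩ := one_lt_card.1 <|
    two_le_hammingNorm_of_sum_eq_zero (hrow i) fun h => hij (congrFun h j)
  calc 4 = 2 + 2 := rfl
    _ ≤ (hammingNorm fun i' => c (i', j₁)) + hammingNorm fun i' => c (i', j₂) :=
      add_le_add (hcol_two j₁ (mem_filter.1 hj₁).2) (hcol_two j₂ (mem_filter.1 hj₂).2)
    _ = ∑ j ∈ {j₁, j₂}, hammingNorm fun i' => c (i', j) :=
      (sum_pair (f := fun j => hammingNorm fun i' => c (i', j)) hne).symm
    _ ≤ ∑ j, hammingNorm fun i' => c (i', j) := sum_le_sum_of_subset (subset_univ _)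
    _ = hammingNorm c := (hammingNorm_eq_sum_cols c).symm

end Matrix

section C10

variable {c c' : Fin 4 × Fin 4 → ZMod 2}

theorem sub_mem_C10 (hc : c ∈ C10) (hc' : c' ∈ C10) : c - c' ∈ C10 := by
  obtain ⟨s, hrow, hcol⟩ := hc
  obtain ⟨s', hrow', hcol'⟩ := hc'
  exact ⟨s - s', fun i => by simp [sum_sub_distrib, hrow i, hrow' i],
    fun j => by simp [sum_sub_distrib, hcol j, hcol' j]⟩

theorem sum_eq_zero_of_mem_C10 (hc : c ∈ C10) : ∑ p, c p = 0 := by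
  obtain ⟨s, hrow, -⟩ := hc
  rw [Fintype.sum_prod_type]
  simp [hrow, nsmul_eq_mul, show (4 : ZMod 2) = 0 from rfl]

theorem four_le_hammingNorm_of_mem_C10 (hc : c ∈ C10) (h0 : c ≠ 0) : 4 ≤ hammingNorm c := by
  obtain ⟨s, hrow, hcol⟩ := hc
  rcases s.eq_zero_or_eq_one with rfl | rfl
  · exact four_le_hammingNorm_of_sums_eq_zero hrow hcol h0
  · simpa using card_le_hammingNorm_of_rows_ne_zero (c := c) fun i h => by
      simpa [show ∀ j, c (i, j) = 0 from congrFun h] using hrow i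

theorem even_hammingDist_of_mem_C10 (hc : c ∈ C10) (hc' : c' ∈ C10) :
    Even (hammingDist c c') := by
  rw [hammingDist_eq_hammingNorm, neg_add_eq_sub]
  exact even_hammingNorm_of_sum_eq_zero (sum_eq_zero_of_mem_C10 (sub_mem_C10 hc' hc))

theorem four_le_hammingDist_of_mem_C10 (hc : c ∈ C10) (hc' : c' ∈ C10) (hne : c ≠ c') :
    4 ≤ hammingDist c c' := by
  rw [hammingDist_eq_hammingNorm, neg_add_eq_sub]
  exact four_le_hammingNorm_of_mem_C10 (sub_mem_C10 hc' hc) (sub_ne_zero.2 hne.symm)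

end C10

theorem sum_bitSign_mul_le_hammingNorm_sub_two {ι : Type*} [Fintype ι] {x c : ι → ZMod 2}
    (hxc : ∑ p, x p * c p = 0) {w : ι → ℝ} (hw : ∀ p, x p ≠ 0 → w p = 1 ∨ w p = -1)
    (hw0 : ∀ p, x p = 0 → w p = 0) (hodd : Odd {p | w p = -1}.ncard) :
    ∑ p, bitSign (c p) * w p ≤ hammingNorm x - 2 := by
  classical
  set F := univ.filter (x · ≠ 0)
  have hsupp : ∑ p ∈ F, bitSign (c p) * w p = ∑ p, bitSign (c p) * w p :=
    sum_filter_of_ne fun p _ h hx => h (by rw [hw0 p hx, mul_zero])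
  have hwF : ∀ p ∈ F, w p = 1 ∨ w p = -1 := fun p hp => hw p (mem_filter.1 hp).2
  have hgF : ∀ p ∈ F, bitSign (c p) * w p = 1 ∨ bitSign (c p) * w p = -1 := fun p hp => by
    rcases bitSign_eq_one_or_neg_one (c p) with h | h <;> rcases hwF p hp with h' | h' <;>
      simp [h, h']
  have hw_prod : ∏ p ∈ F, w p = -1 := by
    have : {p | w p = -1} = ↑(F.filter (w · = -1)) := by
      ext p
      simp only [Set.mem_ofPred_eq, coe_filter, mem_filter, mem_univ, true_and, F]
      exact ⟨fun h => ⟨fun hx => by simp [hw0 p hx] at h, h⟩, And.right⟩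
    rw [prod_eq_neg_one_pow_card_filter hwF, ← Set.ncard_coe_finset, ← this, hodd.neg_one_pow]
  have hc_prod : ∏ p ∈ F, bitSign (c p) = 1 := by
    have hcF : ∑ p ∈ F, c p = ∑ p, x p * c p := by
      rw [sum_filter]
      refine sum_congr rfl fun p _ => ?_
      rcases (x p).eq_zero_or_eq_one with h | h <;> simp [h]
    rw [prod_bitSign, hcF, hxc, bitSign, if_pos rfl]
  have hodd' : Odd #(F.filter fun p => bitSign (c p) * w p = -1) := by
    rw [← neg_one_pow_eq_neg_one_iff_odd (R := ℝ) (by norm_num),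
      ← prod_eq_neg_one_pow_card_filter hgF, prod_mul_distrib, hc_prod, hw_prod, one_mul]
  have hneg : (1 : ℝ) ≤ #(F.filter fun p => bitSign (c p) * w p = -1) := by
    exact_mod_cast hodd'.pos
  rw [← hsupp, sum_eq_card_sub_two_mul_card_filter hgF, show hammingNorm x = #F from rfl]
  linarith

theorem inner_pair17 (v w : EuclideanSpace ℝ (Fin 4 × Fin 4)) (a b : ℝ) :
    ⟪pair17 v a, pair17 w b⟫ = ∑ p, v p * w p + a * b := by
  rw [pair17, pair17, WithLp.prod_inner_apply]
  simp [PiLp.inner_apply, mul_comm]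

theorem inner_holeVector_pair17 (c : Fin 4 × Fin 4 → ZMod 2) (s : ℝ)
    (v : EuclideanSpace ℝ (Fin 4 × Fin 4)) (t : ℝ) :
    ⟪holeVector c s, pair17 v t⟫ = 2 / 3 * ∑ p, bitSign (c p) * v p + s * √8 / 3 * t := by
  rw [holeVector, inner_pair17, mul_sum]
  congr 1
  refine sum_congr rfl fun p _ => ?_
  simp only [bitSign]
  ring

theorem inner_holeVector_holeVector (c c' : Fin 4 × Fin 4 → ZMod 2) (s s' : ℝ) :
    ⟪holeVector c s, holeVector c' s'⟫ =
      4 / 9 * (16 - 2 * hammingDist c c') + 8 / 9 * (s * s') := by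
  have hsum := sum_bitSign_mul_bitSign c c'
  have h8 : √8 * √8 = 8 := Real.mul_self_sqrt (by norm_num)
  have hv : holeVector c' s' =
      pair17 (WithLp.toLp 2 fun p => bitSign (c' p) * (2 / 3)) (s' * √8 / 3) := rfl
  simp only [Fintype.card_prod, Fintype.card_fin] at hsum
  rw [hv, inner_holeVector_pair17]
  simp only [← mul_assoc, ← sum_mul, hsum]
  linear_combination (s * s' / 9) * h8

theorem norm_holeVector_sq (c : Fin 4 × Fin 4 → ZMod 2) (s : ℝ) :
    ‖holeVector c s‖ ^ 2 = 64 / 9 + 8 / 9 * s ^ 2 := by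
  rw [← real_inner_self_eq_norm_sq, inner_holeVector_holeVector, hammingDist_self]
  ring

theorem inner_holeVector_pair17_le (c : Fin 4 × Fin 4 → ZMod 2) {s : ℝ} (hs : s = 1 ∨ s = -1)
    {v : EuclideanSpace ℝ (Fin 4 × Fin 4)} {A : ℝ} (hA : ∑ p, bitSign (c p) * v p ≤ A)
    (t : ℝ) :
    ⟪holeVector c s, pair17 v t⟫ ≤ 2 / 3 * A + √8 / 3 * |t| := by
  have hst : s * t ≤ |t| := by
    rcases hs with rfl | rfl
    · simpa using le_abs_self t
    · simpa using neg_le_abs t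
  rw [inner_holeVector_pair17]
  nlinarith [Real.sqrt_nonneg 8]

theorem inner_holeVector_le_four {c : Fin 4 × Fin 4 → ZMod 2} (hc : c ∈ C10) {s : ℝ}
    (hs : s = 1 ∨ s = -1) {w : Space17} (hw : w ∈ baseConfig17) :
    ⟪holeVector c s, w⟫ ≤ 4 := by
  have h8 : √8 * √8 = 8 := Real.mul_self_sqrt (by norm_num)
  have h82 : √8 * √2 = 4 := by
    rw [← Real.sqrt_mul (by norm_num), show (8 : ℝ) * 2 = 4 ^ 2 by norm_num,
      Real.sqrt_sq (by norm_num)]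
  rcases hw with (⟨u, hu, rfl⟩ | ⟨v, t, ht, ⟨x, hx, hx6, hv, hv0, hodd⟩, rfl⟩) | hw
  · rcases hu with ⟨p, q, hpq, hp, hq, hu0⟩ | ⟨x, hx, hx8, hu, hu0, hodd⟩
    · have hle_two : ∀ r, (u r = 2 ∨ u r = -2) → bitSign (c r) * u r ≤ 2 := fun r hr => by
        rcases hr with h | h <;> simpa [h] using bitSign_mul_le_abs (c r) (u r)
      have hsum : ∑ r, bitSign (c r) * u r ≤ 4 := by
        rw [Fintype.sum_eq_add p q hpq fun r hr => by rw [hu0 r hr.1 hr.2, mul_zero]]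
        linarith [hle_two p hp, hle_two q hq]
      linarith [inner_holeVector_pair17_le c hs hsum 0]
    · have hsum := sum_bitSign_mul_le_hammingNorm_sub_two (hx c hc) hu hu0 hodd
      rw [hx8] at hsum
      linarith [inner_holeVector_pair17_le c hs hsum 0]
  · have hsum := sum_bitSign_mul_le_hammingNorm_sub_two (hx c hc) hv hv0 hodd
    rw [hx6] at hsum
    have ht' : |t| = √2 := by rcases ht with rfl | rfl <;> simp
    linarith [ht' ▸ inner_holeVector_pair17_le c hs hsum t]
  · have hsum : ∑ p, bitSign (c p) * (0 : EuclideanSpace ℝ (Fin 4 × Fin 4)) p ≤ 0 := by simp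
    have habs : |√8| = √8 := abs_of_nonneg (Real.sqrt_nonneg 8)
    rcases hw with rfl | rfl
    · linarith [habs ▸ inner_holeVector_pair17_le c hs hsum √8]
    · linarith [(abs_neg √8).trans habs ▸ inner_holeVector_pair17_le c hs hsum (-√8)]

theorem inner_holeVector_holeVector_le_four_iff {c c' : Fin 4 × Fin 4 → ZMod 2}
    (hc : c ∈ C10) (hc' : c' ∈ C10) {s s' : ℝ} (hs : s = 1 ∨ s = -1)
    (hs' : s' = 1 ∨ s' = -1) :
    ⟪holeVector c s, holeVector c' s'⟫ ≤ 4 ↔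
      (s = s' ∧ 6 ≤ hammingDist c c') ∨ (s ≠ s' ∧ c ≠ c') := by
  obtain ⟨k, hk⟩ := even_hammingDist_of_mem_C10 hc hc'
  rw [inner_holeVector_holeVector]
  by_cases hss : s = s'
  · subst hss
    have : s * s = 1 := by rcases hs with rfl | rfl <;> norm_num
    simp only [true_and, ne_eq, not_true_eq_false, false_and, or_false, this]
    constructor
    · intro h
      have : (4 : ℝ) < hammingDist c c' := by linarith
      have : 4 < hammingDist c c' := by exact_mod_cast this
      omega
    · intro h
      have : (6 : ℝ) ≤ hammingDist c c' := by exact_mod_cast h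
      linarith
  · have : s * s' = -1 := by
      rcases hs with rfl | rfl <;> rcases hs' with rfl | rfl <;> simp_all
    simp only [hss, false_and, ne_eq, not_false_eq_true, true_and, false_or, this]
    constructor
    · rintro h rfl
      rw [hammingDist_self] at h
      norm_num at h
    · intro hne
      have : (4 : ℝ) ≤ hammingDist c c' := by
        exact_mod_cast four_le_hammingDist_of_mem_C10 hc hc' hne
      linarith

/-- For `c ∈ C₁₀` and `s ∈ {1, -1}`: (a) `v_{c,s}` has squared norm 8;
(b) `v_{c,s}` has inner product at most 4 with every vector of the 5346-vector
17-dimensional base configuration `W`; and (c) for `(c,s) ≠ (c',s')`, the inner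
product `⟪v_{c,s}, v_{c',s'}⟫` is at most 4 if and only if either `s = s'` and the
Hamming distance between `c` and `c'` is at least 6, or `s ≠ s'` and `c ≠ c'`. -/
theorem holeVector_properties :
    (∀ c ∈ C10, ∀ s : ℝ, (s = 1 ∨ s = -1) → ‖holeVector c s‖ ^ 2 = 8) ∧
    (∀ c ∈ C10, ∀ s : ℝ, (s = 1 ∨ s = -1) →
      ∀ w ∈ baseConfig17, ⟪holeVector c s, w⟫ ≤ 4) ∧
    (∀ c ∈ C10, ∀ c' ∈ C10, ∀ s s' : ℝ, (s = 1 ∨ s = -1) → (s' = 1 ∨ s' = -1) →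
      (c, s) ≠ (c', s') →
      (⟪holeVector c s, holeVector c' s'⟫ ≤ 4 ↔
        (s = s' ∧ 6 ≤ hammingDist c c') ∨ (s ≠ s' ∧ c ≠ c'))) := by
  refine ⟨fun c _ s hs => ?_, fun c hc s hs w hw => inner_holeVector_le_four hc hs hw,
    fun c hc c' hc' s s' hs hs' _ => inner_holeVector_holeVector_le_four_iff hc hc' hs hs'⟩
  rcases hs with rfl | rfl <;> norm_num [norm_holeVector_sq]
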